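/- arXiv:0709.0172 — 3 statements merged into one kernel-verified Lean document; each statement's English description precedes it below -/
import Mathlib

section
/- Let W ∈ ℝ^{N×N}. Then lim_{k→∞} W^k = (1/N)·1·1ᵀ if and only if 1ᵀW = 1ᵀ, W·1 = 1, and ρ(W − (1/N)·1·1ᵀ) < 1, where ρ denotes spectral radius. -/
/-!
Write `J = (1/N)·𝟙𝟙ᵀ`. If `W ^ k → J`, passing to the limit in `W ^ (k+1) = W * W ^ k = W ^ k * W`
gives `W J = J = J W`, i.e. `W` has unit row and column sums. These identities together with
`J² = J` give `(W - J) ^ (k+1) = W ^ (k+1) - J`, so then `W ^ k → J` iff `(W - J) ^ k → 0`.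
By Gelfand's formula in the complex matrix algebra, the powers of a matrix tend to zero iff all
its complex eigenvalues lie in the open unit disc, i.e. iff its spectral radius is below `1`.
-/

open Matrix Filter

/-- Spectral radius of a real matrix: supremum of moduli of its complex eigenvalues. -/
noncomputable def specRad {n : ℕ} (M : Matrix (Fin n) (Fin n) ℝ) : ℝ :=
  sSup {r : ℝ | ∃ μ : ℂ, (M.map (fun x : ℝ => (x : ℂ))).charpoly.IsRoot μ ∧ r = ‖μ‖}

open Topology

section BanachAlgebra

variable {A : Type*} [NormedRing A] [CompleteSpace A]

theorem norm_lt_one_of_mem_spectrum_of_tendsto_pow {𝕜 : Type*} [NormedField 𝕜]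
    [NormedAlgebra 𝕜 A] {a : A} (ha : Tendsto (a ^ ·) atTop (𝓝 0)) {μ : 𝕜}
    (hμ : μ ∈ spectrum 𝕜 a) : ‖μ‖ < 1 := by
  have hbound (k : ℕ) : ‖μ‖ ^ k ≤ ‖a ^ k‖ * ‖(1 : A)‖ := by
    simpa only [norm_pow] using spectrum.norm_le_norm_mul_of_mem (spectrum.pow_mem_pow a k hμ)
  have hsmall : ∀ᶠ k in atTop, ‖a ^ k‖ * ‖(1 : A)‖ < 1 := by
    have := ha.norm.mul_const ‖(1 : A)‖
    rw [norm_zero, zero_mul] at this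
    exact this.eventually_lt_const one_pos
  obtain ⟨k, hk⟩ := hsmall.exists
  by_contra! h
  exact ((one_le_pow₀ h).trans (hbound k)).not_gt hk

variable [NormedAlgebra ℂ A]

theorem tendsto_pow_of_spectralRadius_lt_one {a : A} (ha : spectralRadius ℂ a < 1) :
    Tendsto (a ^ ·) atTop (𝓝 0) := by
  obtain ⟨r, hr0, hρr, hr1⟩ := ENNReal.lt_iff_exists_real_btwn.1 ha
  have hr1 : r < 1 := by simpa using hr1
  have hroot : ∀ᶠ k : ℕ in atTop, ENNReal.ofReal (‖a ^ k‖ ^ (1 / k : ℝ)) < ENNReal.ofReal r :=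
    (spectrum.pow_norm_pow_one_div_tendsto_nhds_spectralRadius a).eventually_lt_const hρr
  have hbound : ∀ᶠ k : ℕ in atTop, ‖a ^ k‖ ≤ r ^ k := by
    filter_upwards [hroot, eventually_gt_atTop 0] with k hk hk0
    rw [ENNReal.ofReal_lt_ofReal_iff_of_nonneg (by positivity), one_div,
      Real.rpow_inv_lt_iff_of_pos (norm_nonneg _) hr0 (by positivity)] at hk
    exact_mod_cast hk.le
  exact squeeze_zero_norm' hbound (tendsto_pow_atTop_nhds_zero_of_lt_one hr0 hr1)

theorem tendsto_pow_nhds_zero_iff_forall_norm_lt_one (a : A) :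
    Tendsto (a ^ ·) atTop (𝓝 0) ↔ ∀ μ ∈ spectrum ℂ a, ‖μ‖ < 1 := by
  refine ⟨fun h μ hμ => norm_lt_one_of_mem_spectrum_of_tendsto_pow h hμ, fun h => ?_⟩
  nontriviality A
  apply tendsto_pow_of_spectralRadius_lt_one
  exact_mod_cast spectrum.spectralRadius_lt_of_forall_lt a (r := 1) fun μ hμ => h μ hμ

end BanachAlgebra

theorem Real.sSup_lt_iff_of_finite {s : Set ℝ} (hs : s.Finite) {a : ℝ} (ha : 0 < a) :
    sSup s < a ↔ ∀ x ∈ s, x < a := by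
  rcases s.eq_empty_or_nonempty with rfl | hne
  · simpa using ha
  · exact hs.csSup_lt_iff hne

theorem specRad_lt_one_iff {n : ℕ} (M : Matrix (Fin n) (Fin n) ℝ) :
    specRad M < 1 ↔ ∀ μ ∈ spectrum ℂ (M.map (fun x : ℝ => (x : ℂ))), ‖μ‖ < 1 := by
  set p := (M.map (fun x : ℝ => (x : ℂ))).charpoly
  have hroots : {r : ℝ | ∃ μ : ℂ, p.IsRoot μ ∧ r = ‖μ‖} = (‖·‖) '' {μ | p.IsRoot μ} := by
    ext
    simp [eq_comm]
  have hfin := (Polynomial.finite_setOfPred_isRoot (charpoly_monic _).ne_zero :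
    {μ | p.IsRoot μ}.Finite).image (fun μ : ℂ => ‖μ‖)
  rw [specRad, hroots, Real.sSup_lt_iff_of_finite hfin one_pos, Set.forall_mem_image]
  simp [p, Matrix.mem_spectrum_iff_isRoot_charpoly]

theorem tendsto_map_ofReal_nhds_zero_iff {ι m n : Type*} {l : Filter ι}
    {f : ι → Matrix m n ℝ} :
    Tendsto (fun k => (f k).map (fun x : ℝ => (x : ℂ))) l (𝓝 0) ↔ Tendsto f l (𝓝 0) := by
  rw [Complex.isometry_ofReal.isEmbedding.matrix_map.tendsto_nhds_iff,
    Matrix.map_zero _ Complex.ofReal_zero]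
  rfl

section LinftyOpNorm

attribute [local instance] Matrix.linftyOpNormedRing Matrix.linftyOpNormedAlgebra

theorem tendsto_pow_nhds_zero_iff_specRad_lt_one {n : ℕ} (M : Matrix (Fin n) (Fin n) ℝ) :
    Tendsto (M ^ ·) atTop (𝓝 0) ↔ specRad M < 1 := by
  rw [specRad_lt_one_iff, ← tendsto_pow_nhds_zero_iff_forall_norm_lt_one,
    ← tendsto_map_ofReal_nhds_zero_iff]
  have hpow (k : ℕ) : (M ^ k).map (fun x : ℝ => (x : ℂ)) = M.map (fun x : ℝ => (x : ℂ)) ^ k :=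
    Matrix.map_pow M Complex.ofRealHom k
  simp only [hpow]
  -- the topology of the `linfty` operator norm is definitionally the product topology
  rfl

end LinftyOpNorm

theorem mul_eq_of_tendsto_pow {M : Type*} [Monoid M] [TopologicalSpace M] [ContinuousMul M]
    [T2Space M] {a e : M} (h : Tendsto (a ^ ·) atTop (𝓝 e)) : a * e = e := by
  have hshift : Tendsto (fun k => a * a ^ k) atTop (𝓝 e) := by
    simpa only [← pow_succ'] using (tendsto_add_atTop_iff_nat 1).2 h
  exact tendsto_nhds_unique (h.const_mul a) hshift

theorem mul_eq_of_tendsto_pow' {M : Type*} [Monoid M] [TopologicalSpace M] [ContinuousMul M]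
    [T2Space M] {a e : M} (h : Tendsto (a ^ ·) atTop (𝓝 e)) : e * a = e := by
  have hshift : Tendsto (fun k => a ^ k * a) atTop (𝓝 e) := by
    simpa only [← pow_succ] using (tendsto_add_atTop_iff_nat 1).2 h
  exact tendsto_nhds_unique (h.mul_const a) hshift

section Ring

variable {R : Type*} [Ring R] {a e : R}

theorem sub_pow_succ_of_mul_eq (hae : a * e = e) (hea : e * a = e) (he : IsIdempotentElem e)
    (k : ℕ) : (a - e) ^ (k + 1) = a ^ (k + 1) - e := by
  have hpow (m : ℕ) : a ^ m * e = e := by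
    induction m with
    | zero => simp
    | succ m ih => rw [pow_succ, mul_assoc, hae, ih]
  induction k with
  | zero => simp
  | succ k ih =>
    rw [pow_succ, ih, sub_mul, mul_sub, mul_sub, ← pow_succ, hpow, hea, he.eq]
    abel

theorem tendsto_pow_iff_tendsto_sub_pow [TopologicalSpace R] [IsTopologicalAddGroup R]
    (hae : a * e = e) (hea : e * a = e) (he : IsIdempotentElem e) :
    Tendsto (a ^ ·) atTop (𝓝 e) ↔ Tendsto ((a - e) ^ ·) atTop (𝓝 0) := by
  rw [← tendsto_add_atTop_iff_nat 1, ← tendsto_add_atTop_iff_nat (f := ((a - e) ^ ·)) 1]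
  simp only [sub_pow_succ_of_mul_eq hae hea he]
  exact tendsto_sub_nhds_zero_iff.symm

end Ring

section ConstInvMatrix

variable {K : Type*} [Field K] [CharZero K] {N : ℕ}

theorem isIdempotentElem_of_const_inv :
    IsIdempotentElem (of fun _ _ => (N : K)⁻¹ : Matrix (Fin N) (Fin N) K) := by
  ext i j
  have hN : (N : K) ≠ 0 := Nat.cast_ne_zero.2 i.pos.ne'
  simp [mul_apply]
  field_simp

theorem mul_of_const_inv_eq_iff (W : Matrix (Fin N) (Fin N) K) :
    W * (of fun _ _ => (N : K)⁻¹) = (of fun _ _ => (N : K)⁻¹) ↔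
      W *ᵥ (fun _ => 1) = (fun _ => 1) := by
  simp only [← Matrix.ext_iff, funext_iff, mul_apply, of_apply, mulVec, dotProduct, mul_one,
    ← Finset.sum_mul]
  refine forall_congr' fun i => ?_
  have hN : (N : K)⁻¹ ≠ 0 := inv_ne_zero (Nat.cast_ne_zero.2 i.pos.ne')
  have : Nonempty (Fin N) := ⟨i⟩
  simp [hN]

theorem of_const_inv_mul_eq_iff (W : Matrix (Fin N) (Fin N) K) :
    (of fun _ _ => (N : K)⁻¹) * W = (of fun _ _ => (N : K)⁻¹) ↔
      vecMul (fun _ => 1) W = (fun _ => 1) := by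
  simp only [← Matrix.ext_iff, funext_iff, mul_apply, of_apply, vecMul, dotProduct, one_mul,
    ← Finset.mul_sum]
  rw [forall_comm]
  refine forall_congr' fun j => ?_
  have hN : (N : K)⁻¹ ≠ 0 := inv_ne_zero (Nat.cast_ne_zero.2 j.pos.ne')
  have : Nonempty (Fin N) := ⟨j⟩
  simp [hN]

end ConstInvMatrix

theorem pow_tendsto_avg_iff_general {N : ℕ} (W : Matrix (Fin N) (Fin N) ℝ) :
    (∀ i j, Tendsto (fun k => (W ^ k) i j) atTop (nhds ((N : ℝ)⁻¹))) ↔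
      (Matrix.vecMul (fun _ => 1) W = (fun _ => 1) ∧
       W *ᵥ (fun _ => 1) = (fun _ => 1) ∧
       specRad (W - Matrix.of fun _ _ => (N : ℝ)⁻¹) < 1) := by
  set J : Matrix (Fin N) (Fin N) ℝ := of fun _ _ => (N : ℝ)⁻¹
  have hentries : (∀ i j, Tendsto (fun k => (W ^ k) i j) atTop (𝓝 (N : ℝ)⁻¹)) ↔
      Tendsto (W ^ ·) atTop (𝓝 J) :=
    (tendsto_pi_nhds.trans (forall_congr' fun i => tendsto_pi_nhds)).symm
  rw [hentries, ← mul_of_const_inv_eq_iff, ← of_const_inv_mul_eq_iff,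
    ← tendsto_pow_nhds_zero_iff_specRad_lt_one]
  constructor
  · intro h
    have hWJ := mul_eq_of_tendsto_pow h
    have hJW := mul_eq_of_tendsto_pow' h
    exact ⟨hJW, hWJ, (tendsto_pow_iff_tendsto_sub_pow hWJ hJW isIdempotentElem_of_const_inv).1 h⟩
  · rintro ⟨hJW, hWJ, h⟩
    exact (tendsto_pow_iff_tendsto_sub_pow hWJ hJW isIdempotentElem_of_const_inv).2 h

/-- `W^k → (1/N)·1·1ᵀ` iff `1ᵀW = 1ᵀ`, `W·1 = 1` and `ρ(W − (1/N)·1·1ᵀ) < 1`. -/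
theorem pow_tendsto_avg_iff {N : ℕ} (hN : 0 < N) (W : Matrix (Fin N) (Fin N) ℝ) :
    (∀ i j, Tendsto (fun k => (W ^ k) i j) atTop (nhds ((N : ℝ)⁻¹))) ↔
      (Matrix.vecMul (fun _ => 1) W = (fun _ => 1) ∧
       W *ᵥ (fun _ => 1) = (fun _ => 1) ∧
       specRad (W - Matrix.of fun _ _ => (N : ℝ)⁻¹) < 1) :=
  pow_tendsto_avg_iff_general W
end

section
/- Let W ∈ ℝ^{N×N} satisfy 1ᵀW = 1ᵀ, W·1 = 1, and suppose W has a simple eigenvalue at 1 with all other eigenvalues in the open unit disk. Then for any initial state x(0) ∈ ℝ^N, the iteration x(k+1) = W x(k) converges to x̄(0)·1, where x̄(0) = (1/N)Σ_{i=1}^N x_i(0); that is, average-consensus is reached asymptotically. -/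
/-!
Let `P = (1/N) 𝟙 𝟙ᵀ`. The hypotheses `W 𝟙 = 𝟙` and `𝟙ᵀ W = 𝟙ᵀ` give `W P = P W = P² = P`, hence
`W ^ (k + 1) = (W - P) ^ (k + 1) + P`. Brauer's rank-one deflation theorem yields
`(X - 1) χ_{W - P} = X χ_W`, so the eigenvalues of `W - P` are `0` and those of `W` other than the
simple eigenvalue `1`. Thus `W - P` has spectral radius `< 1`, Gelfand's formula gives
`(W - P) ^ k → 0`, and `W ^ k x(0) → P x(0) = x̄(0) 𝟙`.
-/

open Matrix Filter Polynomial Topology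

theorem add_pow_succ_of_mul_eq_zero {R : Type*} [Semiring R] {a p : R} (hap : a * p = 0)
    (hpa : p * a = 0) (hp : IsIdempotentElem p) (k : ℕ) : (a + p) ^ (k + 1) = a ^ (k + 1) + p := by
  induction k with
  | zero => simp
  | succ k ih =>
    have hakp : a ^ (k + 1) * p = 0 := by rw [pow_succ, mul_assoc, hap, mul_zero]
    rw [pow_succ, ih, add_mul, mul_add, mul_add, hakp, hpa, hp.eq, ← pow_succ, add_zero, zero_add]

theorem Polynomial.norm_lt_one_of_X_sub_one_mul_eq_X_mul {𝕜 : Type*} [NormedField 𝕜]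
    {p q : 𝕜[X]} (hpq : (X - C 1) * q = X * p) (hp : p.rootMultiplicity 1 = 1)
    (hroots : ∀ μ, p.IsRoot μ → μ ≠ 1 → ‖μ‖ < 1) {μ : 𝕜} (hμ : q.IsRoot μ) : ‖μ‖ < 1 := by
  have hp0 : p ≠ 0 := by rintro rfl; simp at hp
  have hq0 : q ≠ 0 := by rintro rfl; simp [hp0] at hpq
  rcases eq_or_ne μ 0 with rfl | hμ0
  · simp
  have hpμ : p.IsRoot μ := by
    simpa [hμ.eq_zero, hμ0, IsRoot] using congr_arg (eval μ) hpq
  refine hroots μ hpμ fun hμ1 => ?_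
  subst hμ1
  have hmult := congr_arg (rootMultiplicity 1) hpq
  rw [rootMultiplicity_mul (mul_ne_zero (X_sub_C_ne_zero 1) hq0), rootMultiplicity_X_sub_C_self,
    rootMultiplicity_mul (mul_ne_zero X_ne_zero hp0), hp,
    rootMultiplicity_eq_zero (p := X) (by simp)] at hmult
  exact (rootMultiplicity_pos hq0).2 hμ |>.ne' (by omega)

theorem spectrum.tendsto_pow_atTop_nhds_zero_of_spectralRadius_lt_one {A : Type*} [NormedRing A]
    [NormedAlgebra ℂ A] [CompleteSpace A] {a : A} (ha : spectralRadius ℂ a < 1) :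
    Tendsto (a ^ ·) atTop (𝓝 0) := by
  obtain ⟨r, hρr, hr1⟩ := ENNReal.lt_iff_exists_nnreal_btwn.1 ha
  have hbound : ∀ᶠ k : ℕ in atTop, ‖a ^ k‖ ≤ (r : ℝ) ^ k := by
    filter_upwards [(pow_nnnorm_pow_one_div_tendsto_nhds_spectralRadius a).eventually_lt_const hρr,
      eventually_ne_atTop 0] with k hk hk0
    rw [← ENNReal.coe_rpow_of_nonneg _ (by positivity), ENNReal.coe_lt_coe] at hk
    have hpow := pow_le_pow_left₀ (by positivity) hk.le k
    rw [one_div, NNReal.rpow_inv_natCast_pow _ hk0] at hpow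
    exact_mod_cast hpow
  exact squeeze_zero_norm' hbound
    (tendsto_pow_atTop_nhds_zero_of_lt_one r.2 (by exact_mod_cast hr1))

namespace Matrix

variable {n : Type*} [Fintype n] [DecidableEq n]

theorem det_add_vecMulVec {R : Type*} [CommRing R] {A : Matrix n n R} (hA : IsUnit A.det)
    (u v : n → R) : (A + vecMulVec u v).det = A.det * (1 + v ᵥ* A⁻¹ ⬝ᵥ u) := by
  rw [vecMulVec_eq Unit, det_add_replicateCol_mul_replicateRow hA, ← replicateRow_vecMul,
    replicateRow_mul_replicateCol, det_unique (1 + _)]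
  rfl

theorem X_sub_C_mul_charpoly_sub_vecMulVec {K : Type*} [Field K] [Infinite K]
    {W : Matrix n n K} {a : K} {v : n → K} (hv : v ᵥ* W = a • v) (u : n → K) :
    (X - C a) * (W - vecMulVec u v).charpoly = (X - C a + C (v ⬝ᵥ u)) * W.charpoly := by
  -- compare both sides at the infinitely many `x` that are neither `a` nor eigenvalues of `W`
  refine eq_of_infinite_eval_eq _ _ (((Set.finite_singleton a).union
    (finite_setOfPred_isRoot W.charpoly_monic.ne_zero)).infinite_compl.mono fun x hx => ?_)
  simp only [Set.mem_compl_iff, Set.mem_union, Set.mem_singleton_iff, Set.mem_ofPred_eq,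
    not_or] at hx
  obtain ⟨hxa, hroot⟩ := hx
  replace hxa : x - a ≠ 0 := sub_ne_zero.2 hxa
  set B := scalar n x - W
  have hB : IsUnit B.det := by rw [← eval_charpoly]; exact Ne.isUnit hroot
  have hvB : v ᵥ* B = (x - a) • v := by
    rw [vecMul_sub, hv, sub_smul, scalar_apply, ← smul_one_eq_diagonal, vecMul_smul, vecMul_one]
  have hvBinv : v ᵥ* B⁻¹ = (x - a)⁻¹ • v := by
    rw [eq_inv_smul_iff₀ hxa, ← smul_vecMul, ← hvB, vecMul_vecMul, mul_nonsing_inv B hB,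
      vecMul_one]
  have hsplit : scalar n x - (W - vecMulVec u v) = B + vecMulVec u v := (sub_add _ _ _).symm
  simp only [Set.mem_ofPred_eq, eval_mul, eval_sub, eval_add, eval_X, eval_C, eval_charpoly,
    hsplit, det_add_vecMulVec hB, hvBinv, smul_dotProduct, smul_eq_mul]
  field_simp
  ring

theorem tendsto_pow_atTop_nhds_zero_of_isRoot_charpoly_norm_lt_one {A : Matrix n n ℂ}
    (h : ∀ μ, A.charpoly.IsRoot μ → ‖μ‖ < 1) :
    Tendsto (A ^ ·) atTop (𝓝 0) := by
  rcases isEmpty_or_nonempty n with _ | _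
  · simp [Subsingleton.elim _ (0 : Matrix n n ℂ)]
  -- any submultiplicative norm will do: all of them induce the product topology
  let _ : NormedRing (Matrix n n ℂ) := Matrix.linftyOpNormedRing
  let _ : NormedAlgebra ℂ (Matrix n n ℂ) := Matrix.linftyOpNormedAlgebra
  have : CompleteSpace (Matrix n n ℂ) := FiniteDimensional.complete ℂ _
  refine spectrum.tendsto_pow_atTop_nhds_zero_of_spectralRadius_lt_one ?_
  exact_mod_cast spectrum.spectralRadius_lt_of_forall_lt A fun μ hμ =>
    by exact_mod_cast h μ (mem_spectrum_iff_isRoot_charpoly.1 hμ)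

theorem tendsto_pow_atTop_nhds_vecMulVec {R : Type*} [Ring R] [TopologicalSpace R]
    [IsTopologicalRing R] {W : Matrix n n R} {u v : n → R} (hu : W *ᵥ u = u) (hv : v ᵥ* W = v)
    (huv : v ⬝ᵥ u = 1) (h : Tendsto (fun k => (W - vecMulVec u v) ^ k) atTop (𝓝 0)) :
    Tendsto (W ^ ·) atTop (𝓝 (vecMulVec u v)) := by
  set P := vecMulVec u v
  have hWP : W * P = P := by rw [mul_vecMulVec, hu]
  have hPW : P * W = P := by rw [vecMulVec_mul, hv]
  have hPP : IsIdempotentElem P := by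
    rw [IsIdempotentElem, vecMulVec_mul_vecMulVec, huv, one_smul]
  have hpow (k : ℕ) : W ^ (k + 1) = (W - P) ^ (k + 1) + P := by
    conv_lhs => rw [← sub_add_cancel W P]
    exact add_pow_succ_of_mul_eq_zero (by rw [sub_mul, hWP, hPP.eq, sub_self])
      (by rw [mul_sub, hPW, hPP.eq, sub_self]) hPP k
  rw [← tendsto_add_atTop_iff_nat 1]
  simpa [hpow] using ((tendsto_add_atTop_iff_nat 1).2 h).add_const P

theorem tendsto_pow_atTop_nhds_zero_of_map_ofReal {A : Matrix n n ℝ}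
    (h : Tendsto (fun k => A.map Complex.ofReal ^ k) atTop (𝓝 0)) :
    Tendsto (A ^ ·) atTop (𝓝 0) := by
  have hre (k : ℕ) : (A.map Complex.ofReal ^ k).map Complex.re = A ^ k := by
    rw [show A.map Complex.ofReal = Complex.ofRealHom.mapMatrix A from rfl, ← map_pow,
      RingHom.mapMatrix_apply, map_map]
    simp [Function.comp_def]
  simpa [Function.comp_def, hre] using
    ((continuous_id.matrix_map Complex.continuous_re).tendsto 0).comp h

end Matrix

/-- If `1ᵀW = 1ᵀ`, `W·1 = 1`, `W` has a simple eigenvalue at `1` and all other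
eigenvalues in the open unit disk, then the iteration `x(k+1) = W x(k)` converges to
`x̄(0)·1` for every initial state, i.e. average-consensus is reached asymptotically. -/
theorem average_consensus_of_simple_eig {N : ℕ} (hN : 0 < N) (W : Matrix (Fin N) (Fin N) ℝ)
    (h1 : Matrix.vecMul (fun _ => 1) W = (fun _ => 1))
    (h2 : W *ᵥ (fun _ => 1) = (fun _ => 1))
    (hsimple : ((W.map (fun x : ℝ => (x : ℂ))).charpoly).rootMultiplicity 1 = 1)
    (hothers : ∀ μ : ℂ, (W.map (fun x : ℝ => (x : ℂ))).charpoly.IsRoot μ → μ ≠ 1 →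
      ‖μ‖ < 1) :
    ∀ x0 : Fin N → ℝ, ∀ i, Tendsto (fun k => ((W ^ k) *ᵥ x0) i) atTop
      (nhds ((N : ℝ)⁻¹ * ∑ j, x0 j)) := by
  intro x0 i
  set u : Fin N → ℝ := fun _ => (N : ℝ)⁻¹
  have hu : W *ᵥ u = u := by
    rw [show u = (N : ℝ)⁻¹ • fun _ => 1 from funext fun _ => (mul_one _).symm, mulVec_smul, h2]
  have huv : (fun _ => (1 : ℝ)) ⬝ᵥ u = 1 := by simp [u, dotProduct, hN.ne']
  have hcomplex : (W - vecMulVec u fun _ => 1).map Complex.ofReal =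
      W.map Complex.ofReal - vecMulVec (fun _ => ((N : ℝ)⁻¹ : ℂ)) fun _ => 1 := by
    ext; simp [u, vecMulVec_apply]
  have hv : (fun _ => 1) ᵥ* W.map Complex.ofReal = (1 : ℂ) • fun _ => 1 := by
    ext j
    simpa [vecMul, dotProduct] using congr_arg Complex.ofReal (congr_fun h1 j)
  have hdeflate : Tendsto (fun k => (W - vecMulVec u fun _ => 1) ^ k) atTop (𝓝 0) := by
    apply tendsto_pow_atTop_nhds_zero_of_map_ofReal
    apply tendsto_pow_atTop_nhds_zero_of_isRoot_charpoly_norm_lt_one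
    intro μ hμ
    refine norm_lt_one_of_X_sub_one_mul_eq_X_mul ?_ hsimple hothers hμ
    rw [hcomplex, X_sub_C_mul_charpoly_sub_vecMulVec hv]
    simp [dotProduct, hN.ne']
  have hlim := tendsto_pow_atTop_nhds_vecMulVec hu h1 huv hdeflate
  have hentry := (((continuous_apply i).comp
    (continuous_id.matrix_mulVec (continuous_const (y := x0)))).tendsto _).comp hlim
  simpa [u, vecMulVec_mulVec, dotProduct, Function.comp_def] using hentry
end

section
/- Let L ∈ ℝ^{N×N} be the Laplacian of a strongly connected balanced digraph and let 0 < ε < 1/d_max with d_max = max_i l_{ii}. Then P_ε = I − εL is a doubly stochastic matrix (nonnegative entries, row sums and column sums equal to 1) with positive diagonal, and consequently x(k+1) = P_ε x(k) converges to x̄(0)·1 for every x(0). -/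
/-!
Because `L` has zero row sums, zero column sums (balance) and nonpositive off-diagonal entries,
`P = 1 - ε • L` is doubly stochastic, and `ε * l_ii < 1` makes its diagonal positive. A positive
diagonal lets positive entries of powers persist, so strong connectivity makes some power `P ^ m`
entrywise at least some `δ > 0`. A row-stochastic matrix with entries `≥ δ` shrinks the spread
`max - min` of a vector by the factor `1 - δ`, hence the spread of `P ^ k *ᵥ x` tends to `0`,
while column-stochasticity preserves `∑ j, x j`; so every coordinate tends to the average.
-/

open Matrix Filter Finset Topology

section Laplacian

variable {n R : Type*} [Fintype n] [DecidableEq n] [AddCommGroup R] {a L : Matrix n n R}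

lemma sum_row_eq_zero_of_laplacian (hdiag : ∀ i, L i i = ∑ j ∈ univ \ {i}, a i j)
    (hoff : ∀ i j, i ≠ j → L i j = -a i j) (i : n) : ∑ j, L i j = 0 := by
  rw [sum_eq_add_sum_sdiff_singleton_of_mem (mem_univ i), hdiag,
    sum_congr rfl fun j hj => hoff i j (Ne.symm (by simpa using hj)), sum_neg_distrib,
    add_neg_cancel]

lemma sum_col_eq_zero_of_laplacian (hbal : ∀ i, ∑ j, a i j = ∑ j, a j i)
    (hdiag : ∀ i, L i i = ∑ j ∈ univ \ {i}, a i j) (hoff : ∀ i j, i ≠ j → L i j = -a i j)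
    (j : n) : ∑ i, L i j = 0 := by
  have hbal' : ∑ k ∈ univ \ {j}, a j k = ∑ k ∈ univ \ {j}, a k j := by
    have := hbal j
    rwa [sum_eq_add_sum_sdiff_singleton_of_mem (mem_univ j),
      sum_eq_add_sum_sdiff_singleton_of_mem (mem_univ j) (fun k => a k j), add_right_inj] at this
  rw [sum_eq_add_sum_sdiff_singleton_of_mem (mem_univ j), hdiag, hbal',
    sum_congr rfl fun i hi => hoff i j (by simpa using hi), sum_neg_distrib, add_neg_cancel]

end Laplacian

section PerronMatrix

variable {n R : Type*} [DecidableEq n] [Ring R] [LinearOrder R] [IsStrictOrderedRing R]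
  {a L : Matrix n n R} {ε : R}

lemma one_sub_smul_laplacian_apply_pos (hoff : ∀ i j, i ≠ j → L i j = -a i j) (hε : 0 < ε)
    {i j : n} (hij : i ≠ j) (ha : 0 < a i j) : 0 < (1 - ε • L) i j := by
  simpa [one_apply_ne hij, hoff i j hij] using mul_pos hε ha

variable [Fintype n]

lemma one_sub_smul_laplacian_mem_doublyStochastic (ha : ∀ i j, 0 ≤ a i j)
    (hbal : ∀ i, ∑ j, a i j = ∑ j, a j i) (hdiag : ∀ i, L i i = ∑ j ∈ univ \ {i}, a i j)
    (hoff : ∀ i j, i ≠ j → L i j = -a i j) (hε : 0 ≤ ε) (hεL : ∀ i, ε * L i i ≤ 1) :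
    1 - ε • L ∈ doublyStochastic R n := by
  refine mem_doublyStochastic_iff_sum.2 ⟨fun i j => ?_, fun i => ?_, fun j => ?_⟩
  · rcases eq_or_ne i j with rfl | hij
    · simpa using hεL i
    · simpa [one_apply_ne hij, hoff i j hij] using mul_nonneg hε (ha i j)
  · simp [one_apply, sum_sub_distrib, ← mul_sum, sum_row_eq_zero_of_laplacian hdiag hoff i]
  · simp [one_apply, sum_sub_distrib, ← mul_sum, sum_col_eq_zero_of_laplacian hbal hdiag hoff j]

end PerronMatrix

lemma mul_lt_one_of_lt_one_div_ciSup {ι : Type*} [Finite ι] {f : ι → ℝ} {ε : ℝ} (hε : 0 < ε)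
    (h : ε < 1 / ⨆ i, f i) (i : ι) : ε * f i < 1 := by
  have hsup : 0 < ⨆ i, f i := by
    by_contra! hle
    exact (h.trans_le (one_div_nonpos.2 hle)).not_ge hε.le
  calc ε * f i ≤ ε * ⨆ i, f i :=
        mul_le_mul_of_nonneg_left (le_ciSup (Set.finite_range f).bddAbove i) hε.le
    _ < 1 := (lt_div_iff₀ hsup).1 h

section Primitive

variable {n R : Type*} [Fintype n] [DecidableEq n] [Ring R] [LinearOrder R]
  [IsStrictOrderedRing R] {A : Matrix n n R}

lemma pow_succ_apply_pos (hA : ∀ i j, 0 ≤ A i j) {k : ℕ} {i b c : n}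
    (hib : 0 < (A ^ k) i b) (hbc : 0 < A b c) : 0 < (A ^ (k + 1)) i c := by
  rw [pow_succ, mul_apply]
  exact sum_pos' (fun t _ => mul_nonneg (pow_apply_nonneg hA k i t) (hA t c))
    ⟨b, mem_univ b, mul_pos hib hbc⟩

lemma eventually_pow_apply_pos_of_reflTransGen (hA : ∀ i j, 0 ≤ A i j)
    (hdiag : ∀ i, 0 < A i i) {i j : n} (h : Relation.ReflTransGen (fun p q => 0 < A p q) i j) :
    ∀ᶠ k in atTop, 0 < (A ^ k) i j := by
  induction h with
  | refl =>
    refine Eventually.of_forall fun k => ?_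
    induction k with
    | zero => simp
    | succ k ih => exact pow_succ_apply_pos hA ih (hdiag i)
  | tail _ hbc ih =>
    obtain ⟨k₀, hk₀⟩ := eventually_atTop.1 ih
    refine eventually_atTop.2 ⟨k₀ + 1, fun k hk => ?_⟩
    obtain ⟨k, rfl⟩ := Nat.exists_eq_add_of_le' (k₀.succ_pos.trans_le hk)
    exact pow_succ_apply_pos hA (hk₀ k (by omega)) hbc

lemma isPrimitive_of_reflTransGen (hA : ∀ i j, 0 ≤ A i j) (hdiag : ∀ i, 0 < A i i)
    (hconn : ∀ i j, Relation.ReflTransGen (fun p q => 0 < A p q) i j) : A.IsPrimitive := by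
  have hpos : ∀ᶠ k in atTop, ∀ i j, 0 < (A ^ k) i j :=
    eventually_all.2 fun i => eventually_all.2 fun j =>
      eventually_pow_apply_pos_of_reflTransGen hA hdiag (hconn i j)
  obtain ⟨k, hk, hkpos⟩ := ((eventually_gt_atTop 0).and hpos).exists
  exact ⟨hA, k, hk, hkpos⟩

end Primitive

section Spread

variable {n : Type*} [Fintype n]

lemma mulVec_apply_le_sub_mul [DecidableEq n] {Q : Matrix n n ℝ} (hQ : Q ∈ rowStochastic ℝ n)
    {δ : ℝ} (hδ : ∀ i j, δ ≤ Q i j) {y : n → ℝ} {M : ℝ} (hM : ∀ j, y j ≤ M) (i j₀ : n) :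
    (Q *ᵥ y) i ≤ M - δ * (M - y j₀) := by
  have hgap : M - (Q *ᵥ y) i = ∑ j, Q i j * (M - y j) := by
    simp only [mul_sub, sum_sub_distrib, ← sum_mul, sum_row_of_mem_rowStochastic hQ, one_mul,
      mulVec, dotProduct]
  have hj₀ : Q i j₀ * (M - y j₀) ≤ ∑ j, Q i j * (M - y j) :=
    single_le_sum (fun j _ => mul_nonneg (nonneg_of_mem_rowStochastic hQ (i := i) (j := j))
      (sub_nonneg.2 (hM j))) (mem_univ j₀)
  linarith [mul_le_mul_of_nonneg_right (hδ i j₀) (sub_nonneg.2 (hM j₀))]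

variable [Nonempty n]

noncomputable def spread (y : n → ℝ) : ℝ :=
  univ.sup' univ_nonempty y - univ.inf' univ_nonempty y

lemma abs_sub_le_spread (y : n → ℝ) (i j : n) : |y i - y j| ≤ spread y := by
  have := le_sup' y (mem_univ i)
  have := le_sup' y (mem_univ j)
  have := inf'_le y (mem_univ i)
  have := inf'_le y (mem_univ j)
  rw [abs_le, spread]
  constructor <;> linarith

lemma spread_nonneg (y : n → ℝ) : 0 ≤ spread y :=
  (abs_nonneg _).trans (abs_sub_le_spread y (Classical.arbitrary n) (Classical.arbitrary n))

lemma abs_sub_average_le_spread (y : n → ℝ) (i : n) :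
    |y i - (Fintype.card n : ℝ)⁻¹ * ∑ j, y j| ≤ spread y := by
  have hcard : (0 : ℝ) < Fintype.card n := by exact_mod_cast Fintype.card_pos
  have hcenter : y i - (Fintype.card n : ℝ)⁻¹ * ∑ j, y j =
      (Fintype.card n : ℝ)⁻¹ * ∑ j, (y i - y j) := by
    rw [sum_sub_distrib, sum_const, card_univ, nsmul_eq_mul]
    field_simp
  rw [hcenter, abs_mul, abs_inv, abs_of_pos hcard, inv_mul_le_iff₀ hcard]
  calc |∑ j, (y i - y j)| ≤ ∑ j, |y i - y j| := abs_sum_le_sum_abs _ _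
    _ ≤ ∑ _j : n, spread y := sum_le_sum fun j _ => abs_sub_le_spread y i j
    _ = Fintype.card n * spread y := by rw [sum_const, card_univ, nsmul_eq_mul]

variable [DecidableEq n] {Q : Matrix n n ℝ} {δ : ℝ}

lemma spread_mulVec_le (hQ : Q ∈ rowStochastic ℝ n) (hδ₀ : 0 ≤ δ) (hδ : ∀ i j, δ ≤ Q i j)
    (y : n → ℝ) : spread (Q *ᵥ y) ≤ (1 - δ) * spread y := by
  unfold spread
  obtain ⟨jmax, -, hjmax⟩ := exists_mem_eq_sup' univ_nonempty y
  obtain ⟨jmin, -, hjmin⟩ := exists_mem_eq_inf' univ_nonempty y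
  set M := univ.sup' univ_nonempty y
  set m := univ.inf' univ_nonempty y
  have hupper : ∀ i, (Q *ᵥ y) i ≤ M - δ * (M - m) := fun i =>
    hjmin ▸ mulVec_apply_le_sub_mul hQ hδ (fun j => le_sup' y (mem_univ j)) i jmin
  -- the upper bound applied to `-y`
  have hlower : ∀ i, m + δ * (M - m) ≤ (Q *ᵥ y) i := fun i => by
    have := mulVec_apply_le_sub_mul hQ hδ (y := -y) (M := -m)
      (fun j => neg_le_neg (inf'_le y (mem_univ j))) i jmax
    rw [mulVec_neg, Pi.neg_apply, Pi.neg_apply, ← hjmax] at this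
    linarith
  have hδgap : 0 ≤ δ * (M - m) :=
    mul_nonneg hδ₀ (sub_nonneg.2 ((inf'_le y (mem_univ jmin)).trans (le_sup' y (mem_univ jmin))))
  linarith [sup'_le univ_nonempty _ fun i _ => hupper i,
    le_inf' univ_nonempty _ fun i _ => hlower i]

lemma spread_pow_mulVec_le (hQ : Q ∈ rowStochastic ℝ n) (hδ₀ : 0 ≤ δ) (hδ : ∀ i j, δ ≤ Q i j)
    (y : n → ℝ) (k : ℕ) : spread (Q ^ k *ᵥ y) ≤ (1 - δ) ^ k * spread y := by
  have hδ₁ : 0 ≤ 1 - δ := sub_nonneg.2 ((hδ (Classical.arbitrary n) (Classical.arbitrary n)).trans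
    (le_one_of_mem_rowStochastic hQ))
  induction k with
  | zero => simp
  | succ k ih =>
    calc spread (Q ^ (k + 1) *ᵥ y) = spread (Q *ᵥ (Q ^ k *ᵥ y)) := by
          rw [pow_succ', ← mulVec_mulVec]
      _ ≤ (1 - δ) * spread (Q ^ k *ᵥ y) := spread_mulVec_le hQ hδ₀ hδ _
      _ ≤ (1 - δ) * ((1 - δ) ^ k * spread y) := mul_le_mul_of_nonneg_left ih hδ₁
      _ = (1 - δ) ^ (k + 1) * spread y := by ring

lemma tendsto_spread_pow_mulVec {P : Matrix n n ℝ} (hP : P ∈ rowStochastic ℝ n)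
    (hprim : P.IsPrimitive) (x : n → ℝ) :
    Tendsto (fun k => spread (P ^ k *ᵥ x)) atTop (𝓝 0) := by
  obtain ⟨-, m, hm, hpos⟩ := hprim
  obtain ⟨δ, hδ₀, hδ⟩ : ∃ δ > 0, ∀ i j, δ ≤ (P ^ m) i j :=
    ⟨univ.inf' univ_nonempty fun p : n × n => (P ^ m) p.1 p.2,
      (lt_inf'_iff _).2 fun p _ => hpos p.1 p.2, fun i j => inf'_le _ (mem_univ (i, j))⟩
  have hδ₁ : δ ≤ 1 := (hδ (Classical.arbitrary n) (Classical.arbitrary n)).trans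
    (le_one_of_mem_rowStochastic (pow_mem hP m))
  have hanti : Antitone fun k => spread (P ^ k *ᵥ x) := antitone_nat_of_succ_le fun k => by
    simpa [pow_succ', ← mulVec_mulVec] using
      spread_mulVec_le hP le_rfl (fun i j => nonneg_of_mem_rowStochastic hP) (P ^ k *ᵥ x)
  rw [tendsto_iff_tendsto_subseq_of_antitone hanti (tendsto_id.const_mul_atTop' hm)]
  have hgeom : Tendsto (fun k : ℕ => (1 - δ) ^ k * spread x) atTop (𝓝 0) := by
    simpa using (tendsto_pow_atTop_nhds_zero_of_lt_one (by linarith) (by linarith)).mul_const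
      (spread x)
  refine squeeze_zero (fun k => spread_nonneg _) (fun k => ?_) hgeom
  simpa [pow_mul] using spread_pow_mulVec_le (pow_mem hP m) hδ₀.le hδ x k

end Spread

theorem tendsto_pow_mulVec_apply_average {n : Type*} [Fintype n] [DecidableEq n]
    {P : Matrix n n ℝ} (hP : P ∈ doublyStochastic ℝ n) (hprim : P.IsPrimitive) (x : n → ℝ)
    (i : n) :
    Tendsto (fun k => (P ^ k *ᵥ x) i) atTop (𝓝 ((Fintype.card n : ℝ)⁻¹ * ∑ j, x j)) := by
  have : Nonempty n := ⟨i⟩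
  have hrow : P ∈ rowStochastic ℝ n :=
    (mem_doublyStochastic_iff_mem_rowStochastic_and_mem_colStochastic.1 hP).1
  rw [tendsto_iff_norm_sub_tendsto_zero]
  refine squeeze_zero (fun _ => norm_nonneg _) (fun k => ?_)
    (tendsto_spread_pow_mulVec hrow hprim x)
  rw [Real.norm_eq_abs, ← sum_mulVec_of_mem_doublyStochastic (pow_mem hP k)]
  exact abs_sub_average_le_spread _ i

theorem routine_protocol_consensus_general {N : ℕ}
    (a L : Matrix (Fin N) (Fin N) ℝ)
    (ha : ∀ i j, 0 ≤ a i j)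
    (hbal : ∀ i, ∑ j, a i j = ∑ j, a j i)
    (hdiag : ∀ i, L i i = ∑ j ∈ Finset.univ \ {i}, a i j)
    (hoff : ∀ i j, i ≠ j → L i j = - a i j)
    (hconn : ∀ i j : Fin N, Relation.ReflTransGen (fun p q => p ≠ q ∧ 0 < a p q) i j)
    (ε : ℝ) (hε : 0 < ε) (hε' : ε < 1 / (⨆ i, L i i)) :
    (∀ i j, 0 ≤ ((1 : Matrix (Fin N) (Fin N) ℝ) - ε • L) i j) ∧
    (((1 : Matrix (Fin N) (Fin N) ℝ) - ε • L) *ᵥ (fun _ => 1) = (fun _ => 1)) ∧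
    (Matrix.vecMul (fun _ => 1) ((1 : Matrix (Fin N) (Fin N) ℝ) - ε • L) = (fun _ => 1)) ∧
    (∀ i, 0 < ((1 : Matrix (Fin N) (Fin N) ℝ) - ε • L) i i) ∧
    ∀ x0 : Fin N → ℝ, ∀ i, Tendsto
      (fun k => ((((1 : Matrix (Fin N) (Fin N) ℝ) - ε • L) ^ k) *ᵥ x0) i) atTop
      (nhds ((N : ℝ)⁻¹ * ∑ j, x0 j)) := by
  have hεL : ∀ i, ε * L i i < 1 := mul_lt_one_of_lt_one_div_ciSup hε hε'
  have hP : 1 - ε • L ∈ doublyStochastic ℝ (Fin N) :=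
    one_sub_smul_laplacian_mem_doublyStochastic ha hbal hdiag hoff hε.le fun i => (hεL i).le
  have hnonneg : ∀ i j, 0 ≤ (1 - ε • L) i j := fun i j => nonneg_of_mem_doublyStochastic hP
  have hpos_diag : ∀ i, 0 < (1 - ε • L) i i := fun i => by simpa using hεL i
  have hprim : (1 - ε • L).IsPrimitive :=
    isPrimitive_of_reflTransGen hnonneg hpos_diag fun i j =>
      Relation.ReflTransGen.mono
        (fun _ _ hpq => one_sub_smul_laplacian_apply_pos hoff hε hpq.1 hpq.2) i j (hconn i j)
  refine ⟨hnonneg, mulVec_one_of_mem_doublyStochastic hP, one_vecMul_of_mem_doublyStochastic hP,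
    hpos_diag, fun x0 i => ?_⟩
  simpa using tendsto_pow_mulVec_apply_average hP hprim x0 i

/-- For the Laplacian `L` of a strongly connected balanced digraph and
`0 < ε < 1/d_max`, the matrix `P_ε = I − εL` is doubly stochastic with positive
diagonal, and the routine iteration `x(k+1) = P_ε x(k)` converges to `x̄(0)·1`. -/
theorem routine_protocol_consensus {N : ℕ} (hN : 0 < N)
    (a L : Matrix (Fin N) (Fin N) ℝ)
    (ha : ∀ i j, 0 ≤ a i j)
    (hbal : ∀ i, ∑ j, a i j = ∑ j, a j i)
    (hdiag : ∀ i, L i i = ∑ j ∈ Finset.univ \ {i}, a i j)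
    (hoff : ∀ i j, i ≠ j → L i j = - a i j)
    (hconn : ∀ i j : Fin N, Relation.ReflTransGen (fun p q => p ≠ q ∧ 0 < a p q) i j)
    (ε : ℝ) (hε : 0 < ε) (hε' : ε < 1 / (⨆ i, L i i)) :
    (∀ i j, 0 ≤ ((1 : Matrix (Fin N) (Fin N) ℝ) - ε • L) i j) ∧
    (((1 : Matrix (Fin N) (Fin N) ℝ) - ε • L) *ᵥ (fun _ => 1) = (fun _ => 1)) ∧
    (Matrix.vecMul (fun _ => 1) ((1 : Matrix (Fin N) (Fin N) ℝ) - ε • L) = (fun _ => 1)) ∧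
    (∀ i, 0 < ((1 : Matrix (Fin N) (Fin N) ℝ) - ε • L) i i) ∧
    ∀ x0 : Fin N → ℝ, ∀ i, Tendsto
      (fun k => ((((1 : Matrix (Fin N) (Fin N) ℝ) - ε • L) ^ k) *ᵥ x0) i) atTop
      (nhds ((N : ℝ)⁻¹ * ∑ j, x0 j)) :=
  routine_protocol_consensus_general a L ha hbal hdiag hoff hconn ε hε hε'
end
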